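/- arXiv:2109.02565 — 3 statements merged into one kernel-verified Lean document; each statement's English description precedes it below -/
import Mathlib

section
/- Fix κ > 0 and define, for locally integrable g : (0,∞) → ℝ, the operator T_{−1}g(ξ) := (1/ξ)∫_0^ξ e^{κ(η−ξ)} g(η) dη for ξ > 0. Then there is a constant C (depending only on κ) such that for every g ∈ L³((0,∞)), (∫_0^∞ |T_{−1}g(ξ)|² dξ)^{1/2} ≤ C·(∫_0^∞ |g(η)|³ dη)^{1/3}. -/
open MeasureTheory Real Set Filter

/-- Sliding average `⨍_α f(y) = (1/α) ∫_{y-α}^{y} f(z) dz`. -/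
noncomputable def fint (α : ℝ) (f : ℝ → ℝ) (y : ℝ) : ℝ :=
  (1 / α) * ∫ z in (y - α)..y, f z

/-- Finite difference slope `Δ_α f(y) = (f(y) - f(y-α))/α`. -/
noncomputable def slopeOp (α : ℝ) (f : ℝ → ℝ) (y : ℝ) : ℝ :=
  (f y - f (y - α)) / α

/-- The profile `L_s(y) = (2s/π) arctan((1+s²/3) y)`. -/
noncomputable def Ls (s y : ℝ) : ℝ := (2 * s / Real.pi) * Real.arctan ((1 + s ^ 2 / 3) * y)

/-- `δ_α[f,g](y) = ⨍_α f ⨍_α g - ⨍_{-α} f ⨍_{-α} g`. -/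
noncomputable def deltaOp (α : ℝ) (f g : ℝ → ℝ) (y : ℝ) : ℝ :=
  fint α f y * fint α g y - fint (-α) f y * fint (-α) g y

/-- `J_α[f,g](y) = ⨍_α f ⨍_α g - 2 f g + ⨍_{-α} f ⨍_{-α} g`. -/
noncomputable def Jop (α : ℝ) (f g : ℝ → ℝ) (y : ℝ) : ℝ :=
  fint α f y * fint α g y - 2 * f y * g y + fint (-α) f y * fint (-α) g y

/-- The `H¹` norm `(∫ g² + ∫ (g')²)^{1/2}`. -/
noncomputable def H1norm (g : ℝ → ℝ) : ℝ :=
  Real.sqrt ((∫ y : ℝ, g y ^ 2) + ∫ y : ℝ, deriv g y ^ 2)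

/-- The operator `T₋₁ g(ξ) = ξ⁻¹ ∫₀^ξ e^{κ(η-ξ)} g(η) dη`. -/
noncomputable def Tm1 (κ : ℝ) (g : ℝ → ℝ) (ξ : ℝ) : ℝ :=
  (1 / ξ) * ∫ η in (0:ℝ)..ξ, Real.exp (κ * (η - ξ)) * g η


/-! Hölder's inequality with exponents `3/2` and `3` on `(0, ξ)` bounds `|T₋₁ g(ξ)|` by
`ξ⁻¹ (∫₀^ξ e^{3κ(η-ξ)/2} dη)^{2/3} ‖g‖₃ ≤ ξ⁻¹ min(ξ, 2/(3κ))^{2/3} ‖g‖₃`. The weight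
`ξ⁻¹ min(ξ, c)^{2/3}` is `ξ^{-1/3}` near `0` and `O(ξ⁻¹)` at infinity, so it is square
integrable on `(0, ∞)`, and its `L²` norm is the constant. -/

theorem integral_exp_mul_sub_le_min {a ξ : ℝ} (ha : 0 < a) :
    ∫ η in (0:ℝ)..ξ, exp (a * (η - ξ)) ≤ min ξ a⁻¹ := by
  have hval : ∫ η in (0:ℝ)..ξ, exp (a * (η - ξ)) = a⁻¹ * (1 - exp (-(a * ξ))) := by
    simp_rw [mul_sub]
    rw [intervalIntegral.integral_comp_mul_sub (fun x => exp x) ha.ne', integral_exp]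
    simp [mul_sub]
  have hexp : 1 - a * ξ ≤ exp (-(a * ξ)) := by linarith [add_one_le_exp (-(a * ξ))]
  rw [hval]
  refine le_min ?_ ?_
  · rw [inv_mul_le_iff₀ ha]; linarith
  · exact mul_le_of_le_one_right (inv_nonneg.2 ha.le) (by linarith [exp_pos (-(a * ξ))])

theorem abs_Tm1_le {κ ξ : ℝ} {g : ℝ → ℝ} (hκ : 0 < κ) (hξ : 0 < ξ)
    (hg : MemLp g 3 (volume.restrict (Ioi 0))) :
    |Tm1 κ g ξ| ≤ min ξ (3 * κ / 2)⁻¹ ^ (2 / 3 : ℝ) / ξ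
      * (∫ η in Ioi 0, |g η| ^ 3) ^ (1 / 3 : ℝ) := by
  set μ := volume.restrict (Ioc 0 ξ)
  set e : ℝ → ℝ := fun η => exp (κ * (η - ξ))
  have he : MemLp e (ENNReal.ofReal (3 / 2)) μ := by
    refine MemLp.of_bound (by fun_prop) 1 ?_
    filter_upwards [ae_restrict_mem measurableSet_Ioc] with η hη
    rw [norm_of_nonneg (exp_pos _).le, exp_le_one_iff]
    nlinarith [hη.2]
  have hgμ : MemLp g (ENNReal.ofReal 3) μ := by
    rw [ENNReal.ofReal_ofNat]
    exact hg.mono_measure (Measure.restrict_mono Ioc_subset_Ioi_self le_rfl)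
  have hHolder := integral_mul_norm_le_Lp_mul_Lq
    (Real.holderConjugate_iff.mpr ⟨by norm_num, by norm_num⟩) he hgμ
  have he_norm : (∫ η, ‖e η‖ ^ (3 / 2 : ℝ) ∂μ) ^ (1 / (3 / 2) : ℝ) ≤
      min ξ (3 * κ / 2)⁻¹ ^ (2 / 3 : ℝ) := by
    have : ∫ η, ‖e η‖ ^ (3 / 2 : ℝ) ∂μ = ∫ η in (0:ℝ)..ξ, exp (3 * κ / 2 * (η - ξ)) := by
      rw [intervalIntegral.integral_of_le hξ.le]
      refine integral_congr_ae (ae_of_all _ fun η => ?_)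
      simp only [e, norm_of_nonneg (exp_pos _).le, ← exp_mul]
      ring_nf
    rw [this, show (1 / (3 / 2) : ℝ) = 2 / 3 by norm_num]
    exact rpow_le_rpow (intervalIntegral.integral_nonneg hξ.le fun _ _ => (exp_pos _).le)
      (integral_exp_mul_sub_le_min (by positivity)) (by norm_num)
  have hg_norm : (∫ η, ‖g η‖ ^ (3 : ℝ) ∂μ) ^ (1 / 3 : ℝ) ≤
      (∫ η in Ioi 0, |g η| ^ 3) ^ (1 / 3 : ℝ) := by
    have hint : Integrable (fun η => |g η| ^ 3) (volume.restrict (Ioi 0)) := by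
      simpa using (show MemLp g (3 : ℕ) _ by exact_mod_cast hg).integrable_norm_pow (by norm_num)
    have : ∫ η, ‖g η‖ ^ (3 : ℝ) ∂μ = ∫ η in Ioc 0 ξ, |g η| ^ 3 := by
      norm_cast
    rw [this]
    exact rpow_le_rpow (setIntegral_nonneg measurableSet_Ioc fun _ _ => by positivity)
      (setIntegral_mono_set hint (ae_of_all _ fun _ => by positivity)
        (ae_of_all _ fun _ hη => hη.1)) (by norm_num)
  calc |Tm1 κ g ξ| = ξ⁻¹ * |∫ η, e η * g η ∂μ| := by
        rw [Tm1, intervalIntegral.integral_of_le hξ.le, abs_mul, one_div,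
          abs_of_pos (inv_pos.2 hξ)]
    _ ≤ ξ⁻¹ * ∫ η, ‖e η‖ * ‖g η‖ ∂μ := by
        gcongr
        simpa only [norm_mul, norm_eq_abs] using
          norm_integral_le_integral_norm (fun η => e η * g η)
    _ ≤ ξ⁻¹ * (min ξ (3 * κ / 2)⁻¹ ^ (2 / 3 : ℝ)
          * (∫ η in Ioi 0, |g η| ^ 3) ^ (1 / 3 : ℝ)) := by
        gcongr
        exact hHolder.trans (mul_le_mul he_norm hg_norm (by positivity) (by positivity))
    _ = _ := by ring

theorem integrableOn_sq_min_rpow_div {c s : ℝ} (hc : 0 < c) (hs : 1 / 2 < s) :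
    IntegrableOn (fun ξ => (min ξ c ^ s / ξ) ^ 2) (Ioi 0) := by
  rw [← Ioc_union_Ioi_eq_Ioi hc.le]
  refine IntegrableOn.union ?_ ?_
  · have hpow : IntegrableOn (fun ξ : ℝ => ξ ^ ((s - 1) * 2)) (Ioc 0 c) := by
      rw [← intervalIntegrable_iff_integrableOn_Ioc_of_le hc.le]
      exact intervalIntegral.intervalIntegrable_rpow' (by linarith)
    refine hpow.congr_fun (fun ξ hξ => ?_) measurableSet_Ioc
    dsimp only
    rw [min_eq_left hξ.2, ← rpow_sub_one hξ.1.ne', rpow_mul hξ.1.le]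
    norm_cast
  · have hpow : IntegrableOn (fun ξ : ℝ => (c ^ s) ^ 2 * ξ ^ (-2 : ℝ)) (Ioi c) :=
      (integrableOn_Ioi_rpow_of_lt (by norm_num) hc).const_mul _
    refine hpow.congr_fun (fun ξ hξ => ?_) measurableSet_Ioi
    dsimp only
    rw [min_eq_right (le_of_lt hξ), div_pow, rpow_neg (hc.trans hξ).le, div_eq_mul_inv]
    norm_cast

theorem integral_sq_rpow_half_le_of_abs_le_mul {α : Type*} [MeasurableSpace α] {μ : Measure α}
    {f B : α → ℝ} {N : ℝ} (hB : Integrable (fun x => B x ^ 2) μ) (hN : 0 ≤ N)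
    (h : ∀ᵐ x ∂μ, |f x| ≤ B x * N) :
    (∫ x, |f x| ^ 2 ∂μ) ^ (1 / 2 : ℝ) ≤ (∫ x, B x ^ 2 ∂μ) ^ (1 / 2 : ℝ) * N := by
  -- No integrability of `|f|²` is needed: where it fails, its integral is `0`.
  have hsq : ∫ x, |f x| ^ 2 ∂μ ≤ ∫ x, B x ^ 2 * N ^ 2 ∂μ :=
    integral_mono_of_nonneg (ae_of_all _ fun _ => by positivity) (hB.mul_const _)
      (h.mono fun x hx => by simpa only [mul_pow] using pow_le_pow_left₀ (abs_nonneg _) hx 2)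
  calc (∫ x, |f x| ^ 2 ∂μ) ^ (1 / 2 : ℝ) ≤ (∫ x, B x ^ 2 * N ^ 2 ∂μ) ^ (1 / 2 : ℝ) :=
        rpow_le_rpow (integral_nonneg fun _ => by positivity) hsq (by norm_num)
    _ = (∫ x, B x ^ 2 ∂μ) ^ (1 / 2 : ℝ) * N := by
        rw [integral_mul_const, mul_rpow (integral_nonneg fun _ => by positivity) (sq_nonneg N),
          ← sqrt_eq_rpow, ← sqrt_eq_rpow, sqrt_sq hN]

/-- `T₋₁` is bounded from `L³((0,∞))` to `L²((0,∞))`. -/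
theorem Tm1_L3_to_L2 (κ : ℝ) (hκ : 0 < κ) :
    ∃ C : ℝ, 0 < C ∧ ∀ g : ℝ → ℝ, MemLp g 3 (volume.restrict (Set.Ioi 0)) →
      (∫ ξ in Set.Ioi (0:ℝ), |Tm1 κ g ξ| ^ 2) ^ ((1:ℝ)/2)
        ≤ C * (∫ η in Set.Ioi (0:ℝ), |g η| ^ 3) ^ ((1:ℝ)/3) := by
  set B : ℝ → ℝ := fun ξ => min ξ (3 * κ / 2)⁻¹ ^ (2 / 3 : ℝ) / ξ
  have hB : IntegrableOn (fun ξ => B ξ ^ 2) (Ioi 0) :=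
    integrableOn_sq_min_rpow_div (by positivity) (by norm_num)
  refine ⟨(∫ ξ in Ioi 0, B ξ ^ 2) ^ (1 / 2 : ℝ) + 1, by positivity, fun g hg => ?_⟩
  have hpointwise : ∀ᵐ ξ ∂(volume.restrict (Ioi 0)),
      |Tm1 κ g ξ| ≤ B ξ * (∫ η in Ioi 0, |g η| ^ 3) ^ (1 / 3 : ℝ) :=
    (ae_restrict_iff' measurableSet_Ioi).2 (ae_of_all _ fun ξ hξ => abs_Tm1_le hκ hξ hg)
  calc (∫ ξ in Ioi 0, |Tm1 κ g ξ| ^ 2) ^ (1 / 2 : ℝ)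
      ≤ (∫ ξ in Ioi 0, B ξ ^ 2) ^ (1 / 2 : ℝ) * (∫ η in Ioi 0, |g η| ^ 3) ^ (1 / 3 : ℝ) :=
        integral_sq_rpow_half_le_of_abs_le_mul hB (by positivity) hpointwise
    _ ≤ _ := by gcongr; linarith
end

section
/- There is an absolute constant C such that for all s ∈ (0,1], all y ≥ 0 and all α > 0: |δ_α[L_s](y)| ≤ C·s²·[ 1_{{α ≤ y}}·α·ln(e+α)·min{y, y^{−2}} + 1_{{y ≤ α}}·y·min{α, α^{−1}} ], and |∂_y δ_α[L_s](y)| ≤ C·s²·[ 1_{{α ≤ y}}·α·ln(e+α)·⟨y−α⟩^{−1}·⟨y⟩^{−2} + 1_{{y ≤ α}}·min{α, α^{−1}} ]. -/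
open MeasureTheory Real Set Filter

/-! Write `a = ⨍_α L_s(y)`, `b = ⨍_α L_s(y + α) = ⨍_{-α} L_s(y)` and let `u`, `v` be the
difference quotients `Δ_α L_s` at `y` and `y + α`. Then `δ_α[L_s] = (a - b)(a + b)` and
`∂_y δ_α[L_s] = 2(au - bv) = (a - b)(u + v) + (a + b)(u - v)`.
All factors are controlled by `|L_s| ≤ s`, `0 ≤ L_s' ≤ s/⟨x⟩²`, `|L_s''| ≤ 4s|x|/⟨x⟩⁴` and the
tail bound `s - L_s(p) ≤ s/⟨p⟩` for `p ≥ 0`: `b - a` is an average of `L_s(z + α) - L_s(z)`,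
hence of size `sα/⟨y - α⟩²` or `s arsinh(y)/α`, and `u - v` is a second difference, of size
`α sup |L_s''|`. For `y ≤ α` the bound on `δ_α[L_s]` itself follows from the derivative bound,
because `δ_α[L_s](0) = 0` by oddness of `L_s`. -/

open intervalIntegral

section Averages

variable {f : ℝ → ℝ} {α y M : ℝ}

theorem fint_neg (α : ℝ) (f : ℝ → ℝ) (y : ℝ) : fint (-α) f y = fint α f (y + α) := by
  rw [fint, fint, integral_symm, sub_neg_eq_add, add_sub_cancel_right]
  ring

theorem slopeOp_neg (α : ℝ) (f : ℝ → ℝ) (y : ℝ) : slopeOp (-α) f y = slopeOp α f (y + α) := by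
  rw [slopeOp, slopeOp, sub_neg_eq_add, add_sub_cancel_right, div_neg, ← neg_div, neg_sub]

theorem hasDerivAt_fint (hf : Continuous f) (α y : ℝ) :
    HasDerivAt (fint α f) (slopeOp α f y) y := by
  have hF := fun u => (hf.integral_hasStrictDerivAt 0 u).hasDerivAt
  have hint := fun u v => hf.intervalIntegrable (μ := volume) u v
  have h : fint α f = fun u => α⁻¹ * ((∫ z in 0..u, f z) - ∫ z in 0..u - α, f z) := by
    ext u
    rw [fint, one_div, integral_interval_sub_left (hint _ _) (hint _ _)]
  rw [h, slopeOp, div_eq_inv_mul]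
  exact ((hF y).sub ((hF (y - α)).comp_sub_const y α)).const_mul α⁻¹

theorem deltaOp_self_eq (α : ℝ) (f : ℝ → ℝ) (y : ℝ) :
    deltaOp α f f y = (fint α f y - fint α f (y + α)) * (fint α f y + fint α f (y + α)) := by
  rw [deltaOp, fint_neg]
  ring

theorem hasDerivAt_deltaOp_self (hf : Continuous f) (α y : ℝ) :
    HasDerivAt (deltaOp α f f)
      (2 * (fint α f y * slopeOp α f y - fint α f (y + α) * slopeOp α f (y + α))) y := by
  have h := hasDerivAt_fint hf α y
  have h' := hasDerivAt_fint hf (-α) y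
  rw [slopeOp_neg] at h'
  exact ((h.mul h).sub (h'.mul h')).congr_deriv (by rw [fint_neg]; ring)

theorem deltaOp_self_zero_of_odd (hf : ∀ x, f (-x) = -f x) (α : ℝ) : deltaOp α f f 0 = 0 := by
  have h : ∫ z in -α..0, f z = -∫ z in 0..α, f z := by
    rw [← neg_zero, ← integral_comp_neg, neg_zero]
    simp only [hf, intervalIntegral.integral_neg]
  rw [deltaOp, fint_neg, fint, fint, zero_sub, zero_add, sub_self, h, integral_symm]
  ring

theorem abs_fint_le (hα : 0 < α) (h : ∀ z ∈ Ioc (y - α) y, |f z| ≤ M) : |fint α f y| ≤ M := by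
  have := norm_integral_le_of_norm_le_const (a := y - α) (b := y) (f := f) (C := M)
    (by rwa [uIoc_of_le (by linarith)])
  rw [Real.norm_eq_abs, sub_sub_cancel, abs_of_pos hα] at this
  rw [fint, abs_mul, abs_of_pos (by positivity), one_div, inv_mul_le_iff₀ hα]
  linarith

theorem fint_add_sub_fint (hf : Continuous f) (α y : ℝ) :
    fint α f (y + α) - fint α f y = fint α (fun z => f (z + α) - f z) y := by
  have hshift : IntervalIntegrable (fun z => f (z + α)) volume (y - α) y :=
    (hf.comp (continuous_add_const α)).intervalIntegrable _ _
  rw [fint, fint, fint, add_sub_cancel_right, ← mul_sub,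
    integral_sub hshift (hf.intervalIntegrable _ _), integral_comp_add_right, sub_add_cancel]

theorem abs_slopeOp_le (hα : 0 < α) (h : ∀ x, |f x| ≤ M) (y : ℝ) :
    |slopeOp α f y| ≤ 2 * M / α := by
  rw [slopeOp, abs_div, abs_of_pos hα]
  gcongr
  linarith [abs_sub (f y) (f (y - α)), h y, h (y - α)]

theorem abs_slopeOp_add_sub_slopeOp_le {f' f'' : ℝ → ℝ} (hf : ∀ x, HasDerivAt f (f' x) x)
    (hf' : ∀ x, HasDerivAt f' (f'' x) x) (hα : 0 < α)
    (hM : ∀ x ∈ Icc (y - α) (y + α), |f'' x| ≤ M) :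
    |slopeOp α f (y + α) - slopeOp α f y| ≤ M * α := by
  have hf'_sub : ∀ x ∈ Icc (y - α) y, |f' (x + α) - f' x| ≤ M * α := fun x hx => by
    have := norm_image_sub_le_of_norm_deriv_le_segment' (fun z _ => (hf' z).hasDerivWithinAt)
      (fun z hz => hM z ⟨by linarith [hx.1, hz.1], by linarith [hx.2, hz.2]⟩) (x + α)
      ⟨by linarith, le_rfl⟩
    rwa [add_sub_cancel_left] at this
  have h := norm_image_sub_le_of_norm_deriv_le_segment' (f := fun x => f (x + α) - f x)
    (fun x _ => (((hf (x + α)).comp_add_const x α).sub (hf x)).hasDerivWithinAt)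
    (fun x hx => hf'_sub x (Ico_subset_Icc_self hx)) y ⟨by linarith, le_rfl⟩
  rw [Real.norm_eq_abs, sub_add_cancel, sub_sub_cancel] at h
  rw [slopeOp, slopeOp, add_sub_cancel_right, ← sub_div, abs_div, abs_of_pos hα,
    div_le_iff₀ hα]
  exact h

end Averages

section Profile

variable {s p q : ℝ}

noncomputable def LsDeriv (s x : ℝ) : ℝ :=
  2 * s / π * ((1 + s ^ 2 / 3) / (1 + (1 + s ^ 2 / 3) ^ 2 * x ^ 2))

noncomputable def LsDeriv2 (s x : ℝ) : ℝ :=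
  -(2 * s / π * (2 * (1 + s ^ 2 / 3) ^ 3 * x / (1 + (1 + s ^ 2 / 3) ^ 2 * x ^ 2) ^ 2))

theorem continuous_Ls (s : ℝ) : Continuous (Ls s) := by
  unfold Ls; fun_prop

theorem Ls_neg (s x : ℝ) : Ls s (-x) = -Ls s x := by
  rw [Ls, Ls, mul_neg, arctan_neg, mul_neg]

theorem Ls_monotone (hs : 0 ≤ s) : Monotone (Ls s) := fun p q hpq =>
  mul_le_mul_of_nonneg_left (arctan_mono (by nlinarith)) (by positivity)

theorem abs_Ls_le (hs : 0 ≤ s) (x : ℝ) : |Ls s x| ≤ s := by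
  have h := (abs_lt.2 ⟨neg_pi_div_two_lt_arctan ((1 + s ^ 2 / 3) * x),
    arctan_lt_pi_div_two ((1 + s ^ 2 / 3) * x)⟩).le
  rw [Ls, abs_mul, abs_of_nonneg (by positivity)]
  calc 2 * s / π * |arctan ((1 + s ^ 2 / 3) * x)| ≤ 2 * s / π * (π / 2) := by gcongr
    _ = s := by field_simp

theorem hasDerivAt_Ls (s x : ℝ) : HasDerivAt (Ls s) (LsDeriv s x) x := by
  have h := ((hasDerivAt_id x).const_mul (1 + s ^ 2 / 3)).arctan.const_mul (2 * s / π)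
  refine h.congr_deriv ?_
  simp only [LsDeriv, id, mul_one, mul_pow]
  ring

theorem hasDerivAt_LsDeriv (s x : ℝ) : HasDerivAt (LsDeriv s) (LsDeriv2 s x) x := by
  have hD : 1 + (1 + s ^ 2 / 3) ^ 2 * x ^ 2 ≠ 0 := by positivity
  have h := ((hasDerivAt_const x (1 + s ^ 2 / 3)).div
    (((hasDerivAt_pow 2 x).const_mul ((1 + s ^ 2 / 3) ^ 2)).const_add 1) hD).const_mul (2 * s / π)
  exact h.congr_deriv (by rw [LsDeriv2]; field_simp; norm_num; ring)

theorem abs_LsDeriv_le (hs : 0 ≤ s) (hs1 : s ≤ 1) (x : ℝ) : |LsDeriv s x| ≤ s / (1 + x ^ 2) := by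
  have hπ := pi_gt_three
  have hβ : 1 ≤ 1 + s ^ 2 / 3 := by nlinarith
  have hβ' : 1 + s ^ 2 / 3 ≤ 4 / 3 := by nlinarith
  have hx : x ^ 2 ≤ (1 + s ^ 2 / 3) ^ 2 * x ^ 2 :=
    le_mul_of_one_le_left (sq_nonneg x) (by nlinarith)
  rw [LsDeriv, abs_of_nonneg (by positivity), div_mul_div_comm,
    div_le_div_iff₀ (by positivity) (by positivity)]
  calc 2 * s * (1 + s ^ 2 / 3) * (1 + x ^ 2) ≤ s * (3 * (1 + x ^ 2)) := by
        have := mul_nonneg hs (sq_nonneg x); nlinarith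
    _ ≤ s * (π * (1 + (1 + s ^ 2 / 3) ^ 2 * x ^ 2)) := by gcongr

theorem abs_LsDeriv2_le (hs : 0 ≤ s) (hs1 : s ≤ 1) (x : ℝ) :
    |LsDeriv2 s x| ≤ 4 * s * |x| / (1 + x ^ 2) ^ 2 := by
  have hπ := pi_gt_three
  have hβ : (1 + s ^ 2 / 3) ^ 3 ≤ 3 :=
    (pow_le_pow_left₀ (by positivity) (by nlinarith : 1 + s ^ 2 / 3 ≤ 4 / 3) 3).trans (by norm_num)
  have hx : (1 + x ^ 2) ^ 2 ≤ (1 + (1 + s ^ 2 / 3) ^ 2 * x ^ 2) ^ 2 := by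
    gcongr; exact le_mul_of_one_le_left (sq_nonneg x) (by nlinarith)
  rw [LsDeriv2, abs_neg, abs_mul, abs_of_nonneg (by positivity : 0 ≤ 2 * s / π), abs_div, abs_mul,
    abs_of_nonneg (by positivity : (0 : ℝ) ≤ 2 * (1 + s ^ 2 / 3) ^ 3),
    abs_of_pos (by positivity : (0 : ℝ) < (1 + (1 + s ^ 2 / 3) ^ 2 * x ^ 2) ^ 2),
    div_mul_div_comm, div_le_div_iff₀ (by positivity) (by positivity)]
  calc 2 * s * (2 * (1 + s ^ 2 / 3) ^ 3 * |x|) * (1 + x ^ 2) ^ 2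
      ≤ 2 * s * (2 * 3 * |x|) * (1 + (1 + s ^ 2 / 3) ^ 2 * x ^ 2) ^ 2 := by gcongr
    _ ≤ 4 * s * |x| * (π * (1 + (1 + s ^ 2 / 3) ^ 2 * x ^ 2) ^ 2) := by
      have : 0 ≤ s * |x| * (1 + (1 + s ^ 2 / 3) ^ 2 * x ^ 2) ^ 2 := by positivity
      nlinarith

theorem Ls_sub_le_of_nonneg (hs : 0 ≤ s) (hs1 : s ≤ 1) (hp : 0 ≤ p) (hpq : p ≤ q) :
    Ls s q - Ls s p ≤ s * (q - p) / (1 + p ^ 2) := by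
  have h := norm_image_sub_le_of_norm_deriv_le_segment' (f := Ls s) (C := s / (1 + p ^ 2))
    (fun x _ => (hasDerivAt_Ls s x).hasDerivWithinAt)
    (fun x hx => (abs_LsDeriv_le hs hs1 x).trans
      (div_le_div_of_nonneg_left hs (by positivity) (by nlinarith [hx.1]))) q ⟨hpq, le_rfl⟩
  rw [mul_div_right_comm]
  exact (le_abs_self _).trans h

theorem Ls_sub_le (hs : 0 ≤ s) (hs1 : s ≤ 1) (hpq : p ≤ q) : Ls s q - Ls s p ≤ s * (q - p) := by
  have h := norm_image_sub_le_of_norm_deriv_le_segment' (f := Ls s) (C := s)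
    (fun x _ => (hasDerivAt_Ls s x).hasDerivWithinAt)
    (fun x _ => (abs_LsDeriv_le hs hs1 x).trans (div_le_self hs (by nlinarith [sq_nonneg x])))
    q ⟨hpq, le_rfl⟩
  exact (le_abs_self _).trans h

theorem pi_div_two_sub_arctan_le (hp : 0 ≤ p) : π / 2 - arctan p ≤ π / 2 / √(1 + p ^ 2) := by
  have hθ0 : 0 ≤ π / 2 - arctan p := sub_nonneg.2 (arctan_lt_pi_div_two p).le
  have hθ1 : π / 2 - arctan p ≤ π / 2 := sub_le_self _ (arctan_nonneg.2 hp)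
  have h := mul_le_sin hθ0 hθ1
  rw [sin_pi_div_two_sub, cos_arctan] at h
  rw [le_div_iff₀ (by positivity)]
  field_simp at h ⊢
  linarith

theorem Ls_sub_le_tail (hs : 0 ≤ s) (hp : 0 ≤ p) (q : ℝ) : Ls s q - Ls s p ≤ s / √(1 + p ^ 2) := by
  have hq : Ls s q ≤ s := (le_abs_self _).trans (abs_Ls_le hs q)
  have hp' : arctan p ≤ arctan ((1 + s ^ 2 / 3) * p) := arctan_mono (by nlinarith)
  have h := pi_div_two_sub_arctan_le hp
  have : s - Ls s p ≤ 2 * s / π * (π / 2 / √(1 + p ^ 2)) := by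
    calc s - Ls s p = 2 * s / π * (π / 2 - arctan ((1 + s ^ 2 / 3) * p)) := by
          rw [Ls]; field_simp
      _ ≤ 2 * s / π * (π / 2 / √(1 + p ^ 2)) := by gcongr; linarith
  calc Ls s q - Ls s p ≤ 2 * s / π * (π / 2 / √(1 + p ^ 2)) := by linarith
    _ = s / √(1 + p ^ 2) := by field_simp

end Profile

section Windows

variable {s α t : ℝ}

theorem abs_fint_Ls_le (hs : 0 ≤ s) (hα : 0 < α) (t : ℝ) : |fint α (Ls s) t| ≤ s :=
  abs_fint_le hα fun z _ => abs_Ls_le hs z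

theorem abs_fint_Ls_le_mul (hs : 0 ≤ s) (hs1 : s ≤ 1) (hα : 0 < α) (ht : α ≤ t) :
    |fint α (Ls s) t| ≤ s * t :=
  abs_fint_le hα fun z hz => by
    have h0 : Ls s 0 = 0 := by simp [Ls]
    have hz0 : 0 ≤ z := by linarith [hz.1]
    rw [abs_of_nonneg (h0 ▸ Ls_monotone hs hz0)]
    have := Ls_sub_le hs hs1 hz0
    nlinarith [hz.2]

theorem slopeOp_Ls_nonneg (hs : 0 ≤ s) (hα : 0 < α) (t : ℝ) : 0 ≤ slopeOp α (Ls s) t :=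
  div_nonneg (sub_nonneg.2 (Ls_monotone hs (by linarith))) hα.le

theorem slopeOp_Ls_le (hs : 0 ≤ s) (hs1 : s ≤ 1) (hα : 0 < α) (t : ℝ) :
    slopeOp α (Ls s) t ≤ s := by
  rw [slopeOp, div_le_iff₀ hα]
  simpa using Ls_sub_le hs hs1 (by linarith : t - α ≤ t)

theorem slopeOp_Ls_le_of_le (hs : 0 ≤ s) (hs1 : s ≤ 1) (hα : 0 < α) (ht : α ≤ t) :
    slopeOp α (Ls s) t ≤ s / (1 + (t - α) ^ 2) := by
  have h := Ls_sub_le_of_nonneg hs hs1 (by linarith : 0 ≤ t - α) (by linarith : t - α ≤ t)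
  rwa [sub_sub_cancel, ← div_mul_eq_mul_div, ← div_le_iff₀ hα] at h

theorem slopeOp_Ls_le_tail (hs : 0 ≤ s) (hα : 0 < α) (ht : α ≤ t) :
    slopeOp α (Ls s) t ≤ s / (α * √(1 + (t - α) ^ 2)) := by
  rw [slopeOp, mul_comm, ← div_div]
  gcongr
  exact Ls_sub_le_tail hs (by linarith) t

theorem abs_fint_Ls_add_sub_le (hs : 0 ≤ s) (hs1 : s ≤ 1) (hα : 0 < α) (t : ℝ) :
    |fint α (Ls s) (t + α) - fint α (Ls s) t| ≤ s * α := by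
  rw [fint_add_sub_fint (continuous_Ls s)]
  refine abs_fint_le hα fun z _ => ?_
  rw [abs_of_nonneg (sub_nonneg.2 (Ls_monotone hs (by linarith)))]
  simpa using Ls_sub_le hs hs1 (by linarith : z ≤ z + α)

theorem abs_fint_Ls_add_sub_le_of_le (hs : 0 ≤ s) (hs1 : s ≤ 1) (hα : 0 < α) (ht : α ≤ t) :
    |fint α (Ls s) (t + α) - fint α (Ls s) t| ≤ s * α / (1 + (t - α) ^ 2) := by
  rw [fint_add_sub_fint (continuous_Ls s)]
  refine abs_fint_le hα fun z hz => ?_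
  have hz0 : 0 ≤ z := by linarith [hz.1]
  rw [abs_of_nonneg (sub_nonneg.2 (Ls_monotone hs (by linarith)))]
  refine (Ls_sub_le_of_nonneg hs hs1 hz0 (by linarith)).trans ?_
  rw [add_sub_cancel_left]
  gcongr
  nlinarith [hz.1]

theorem abs_fint_Ls_add_sub_le_arsinh (hs : 0 ≤ s) (hα : 0 < α) (ht : α ≤ t) :
    |fint α (Ls s) (t + α) - fint α (Ls s) t| ≤ s * arsinh t / α := by
  have hcont : Continuous fun z : ℝ => s * (√(1 + z ^ 2))⁻¹ :=
    continuous_const.mul (Continuous.inv₀ (by fun_prop) fun z => by positivity)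
  have hprim : ∫ z in 0..t, s * (√(1 + z ^ 2))⁻¹ = s * arsinh t := by
    rw [integral_eq_sub_of_hasDerivAt (fun z _ => (hasDerivAt_arsinh z).const_mul s)
      (hcont.intervalIntegrable 0 t), arsinh_zero, mul_zero, sub_zero]
  have hmono : ∫ z in t - α..t, s * (√(1 + z ^ 2))⁻¹ ≤ ∫ z in 0..t, s * (√(1 + z ^ 2))⁻¹ :=
    integral_mono_interval (by linarith) (by linarith) le_rfl
      (Eventually.of_forall fun z => by positivity) (hcont.intervalIntegrable 0 t)
  have htail : ∀ z ∈ Icc (t - α) t, Ls s (z + α) - Ls s z ≤ s * (√(1 + z ^ 2))⁻¹ :=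
    fun z hz => (Ls_sub_le_tail hs (by linarith [hz.1]) _).trans_eq (div_eq_mul_inv _ _)
  have hcont' : Continuous fun z => Ls s (z + α) - Ls s z :=
    ((continuous_Ls s).comp (continuous_add_const α)).sub (continuous_Ls s)
  rw [fint_add_sub_fint (continuous_Ls s), fint, abs_of_nonneg, one_div, inv_mul_eq_div]
  · gcongr
    exact (integral_mono_on (by linarith) (hcont'.intervalIntegrable _ _)
      (hcont.intervalIntegrable _ _) htail).trans (hmono.trans_eq hprim)
  · exact mul_nonneg (by positivity) (integral_nonneg (by linarith)
      fun z _ => sub_nonneg.2 (Ls_monotone hs (by linarith)))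

theorem abs_slopeOp_Ls_add_sub_le (hs : 0 ≤ s) (hs1 : s ≤ 1) (hα : 0 < α) (t : ℝ) :
    |slopeOp α (Ls s) (t + α) - slopeOp α (Ls s) t| ≤ 2 * s * α :=
  abs_slopeOp_add_sub_slopeOp_le (hasDerivAt_Ls s) (hasDerivAt_LsDeriv s) hα fun x _ => by
    refine (abs_LsDeriv2_le hs hs1 x).trans ?_
    have hx : 2 * |x| ≤ (1 + x ^ 2) ^ 2 := by nlinarith [sq_abs x, sq_nonneg (|x| - 1)]
    rw [div_le_iff₀ (by positivity)]
    nlinarith [mul_le_mul_of_nonneg_left hx hs]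

theorem abs_slopeOp_Ls_add_sub_le_of_two_mul_le (hs : 0 ≤ s) (hs1 : s ≤ 1) (hα : 0 < α)
    (ht : 2 * α ≤ t) :
    |slopeOp α (Ls s) (t + α) - slopeOp α (Ls s) t| ≤ 96 * s * t / (1 + t ^ 2) ^ 2 * α :=
  abs_slopeOp_add_sub_slopeOp_le (hasDerivAt_Ls s) (hasDerivAt_LsDeriv s) hα fun x hx => by
    refine (abs_LsDeriv2_le hs hs1 x).trans ?_
    have hx0 : t / 2 ≤ x := by linarith [hx.1]
    have hx1 : x ≤ 3 / 2 * t := by linarith [hx.2]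
    have hsq : (1 + t ^ 2) ^ 2 ≤ 16 * (1 + x ^ 2) ^ 2 := by
      have : 1 + t ^ 2 ≤ 4 * (1 + x ^ 2) := by nlinarith
      nlinarith
    have ht0 : 0 ≤ t := by linarith
    rw [abs_of_nonneg (by linarith), div_le_div_iff₀ (by positivity) (by positivity)]
    calc 4 * s * x * (1 + t ^ 2) ^ 2 ≤ 4 * s * (3 / 2 * t) * (16 * (1 + x ^ 2) ^ 2) := by
          gcongr
      _ = 96 * s * t * (1 + x ^ 2) ^ 2 := by ring

end Windows

theorem abs_two_mul_mul_sub_mul_le (a b u v : ℝ) :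
    |2 * (a * u - b * v)| ≤ 2 * (|a| * |u| + |b| * |v|) := by
  rw [abs_mul, abs_two, ← abs_mul, ← abs_mul]
  gcongr
  exact abs_sub _ _

theorem abs_two_mul_mul_sub_mul_le_sum_diff (a b u v : ℝ) :
    |2 * (a * u - b * v)| ≤ |a - b| * |u + v| + |a + b| * |u - v| := by
  rw [← abs_mul, ← abs_mul,
    show 2 * (a * u - b * v) = (a - b) * (u + v) + (a + b) * (u - v) by ring]
  exact abs_add_le _ _

theorem one_le_log_exp_one_add {α : ℝ} (hα : 0 ≤ α) : 1 ≤ log (exp 1 + α) := by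
  rw [le_log_iff_exp_le (by positivity)]
  linarith

theorem arsinh_le_two_mul_log {α y : ℝ} (hy : 0 ≤ y) (hyα : y ≤ 2 * α) :
    arsinh y ≤ 2 * log (exp 1 + α) := by
  have he : 2 ≤ exp 1 := by linarith [add_one_le_exp (1 : ℝ)]
  have hsq : √(1 + y ^ 2) ≤ 1 + y := by
    rw [sqrt_le_left (by linarith)]; nlinarith
  rw [arsinh, show 2 * log (exp 1 + α) = log ((exp 1 + α) ^ 2) by rw [log_pow]; norm_num]
  apply log_le_log (by positivity)
  nlinarith

theorem le_mul_ite_add_ite {P Q : Prop} [Decidable P] [Decidable Q] {x c X Y : ℝ} (hc : 0 ≤ c)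
    (hPQ : P ∨ Q) (hX : P → 0 ≤ X ∧ x ≤ c * X) (hY : Q → 0 ≤ Y ∧ x ≤ c * Y) :
    x ≤ c * ((if P then X else 0) + if Q then Y else 0) := by
  split_ifs with hP hQ hQ
  · nlinarith [hX hP, hY hQ]
  · simpa using (hX hP).2
  · simpa using (hY hQ).2
  · exact (hPQ.elim hP hQ).elim

section DeltaBounds

variable {s α y : ℝ}

theorem abs_deriv_deltaOp_Ls_le (hs : 0 ≤ s) (hs1 : s ≤ 1) (hα : 0 < α) (y : ℝ) :
    |deriv (deltaOp α (Ls s) (Ls s)) y| ≤ 8 * s ^ 2 * min α α⁻¹ := by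
  rw [(hasDerivAt_deltaOp_self (continuous_Ls s) α y).deriv, mul_min_of_nonneg _ _ (by positivity)]
  have ha := abs_fint_Ls_le hs hα y
  have hb := abs_fint_Ls_le hs hα (y + α)
  have hu := abs_slopeOp_le hα (abs_Ls_le hs) y
  have hv := abs_slopeOp_le hα (abs_Ls_le hs) (y + α)
  refine le_min ?_ ?_
  · have hab := abs_fint_Ls_add_sub_le hs hs1 hα y
    have huv := abs_slopeOp_Ls_add_sub_le hs hs1 hα y
    have hu0 := slopeOp_Ls_nonneg hs hα y
    have hv0 := slopeOp_Ls_nonneg hs hα (y + α)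
    have hu1 := slopeOp_Ls_le hs hs1 hα y
    have hv1 := slopeOp_Ls_le hs hs1 hα (y + α)
    rw [abs_sub_comm] at hab
    rw [abs_sub_comm] at huv
    calc _ ≤ _ := abs_two_mul_mul_sub_mul_le_sum_diff _ _ _ _
      _ ≤ s * α * (2 * s) + (s + s) * (2 * s * α) := by
        gcongr
        · rw [abs_of_nonneg (by linarith)]; linarith
        · exact (abs_add_le _ _).trans (add_le_add ha hb)
      _ ≤ 8 * s ^ 2 * α := by nlinarith [mul_nonneg (sq_nonneg s) hα.le]
  · calc _ ≤ _ := abs_two_mul_mul_sub_mul_le _ _ _ _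
      _ ≤ 2 * (s * (2 * s / α) + s * (2 * s / α)) := by gcongr
      _ = 8 * s ^ 2 * α⁻¹ := by ring

theorem abs_deltaOp_Ls_le (hs : 0 ≤ s) (hs1 : s ≤ 1) (hα : 0 < α) (hy : 0 ≤ y) :
    |deltaOp α (Ls s) (Ls s) y| ≤ 8 * s ^ 2 * min α α⁻¹ * y := by
  have hδ z := (hasDerivAt_deltaOp_self (continuous_Ls s) α z).differentiableAt.hasDerivAt
  have h := norm_image_sub_le_of_norm_deriv_le_segment' (fun z _ => (hδ z).hasDerivWithinAt)
    (fun z _ => abs_deriv_deltaOp_Ls_le hs hs1 hα z) y ⟨hy, le_rfl⟩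
  rwa [deltaOp_self_zero_of_odd (Ls_neg s) α, sub_zero, sub_zero] at h

theorem abs_deltaOp_Ls_le_mul (hs : 0 ≤ s) (hs1 : s ≤ 1) (hα : 0 < α) (hαy : α ≤ y) :
    |deltaOp α (Ls s) (Ls s) y| ≤ 3 * s ^ 2 * α * y := by
  have hab := abs_fint_Ls_add_sub_le hs hs1 hα y
  have ha := abs_fint_Ls_le_mul hs hs1 hα hαy
  have hb := abs_fint_Ls_le_mul hs hs1 hα (by linarith : α ≤ y + α)
  rw [deltaOp_self_eq, abs_mul, abs_sub_comm]
  calc _ ≤ s * α * (s * y + s * (y + α)) := by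
        gcongr; exact (abs_add_le _ _).trans (add_le_add ha hb)
    _ ≤ 3 * s ^ 2 * α * y := by nlinarith [mul_nonneg (mul_nonneg hs hs) hα.le]

theorem abs_deltaOp_Ls_le_of_two_mul_le (hs : 0 ≤ s) (hs1 : s ≤ 1) (hα : 0 < α)
    (hαy : 2 * α ≤ y) : |deltaOp α (Ls s) (Ls s) y| ≤ 8 * s ^ 2 * α / (1 + y ^ 2) := by
  have hab := abs_fint_Ls_add_sub_le_of_le hs hs1 hα (by linarith : α ≤ y)
  have ha := abs_fint_Ls_le hs hα y
  have hb := abs_fint_Ls_le hs hα (y + α)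
  have hy : 1 + y ^ 2 ≤ 4 * (1 + (y - α) ^ 2) := by nlinarith
  rw [deltaOp_self_eq, abs_mul, abs_sub_comm]
  calc _ ≤ s * α / (1 + (y - α) ^ 2) * (s + s) := by
        gcongr; exact (abs_add_le _ _).trans (add_le_add ha hb)
    _ ≤ 8 * s ^ 2 * α / (1 + y ^ 2) := by
        rw [div_mul_eq_mul_div, div_le_div_iff₀ (by positivity) (by positivity)]
        have := mul_le_mul_of_nonneg_left hy (mul_nonneg (sq_nonneg s) hα.le)
        linarith

theorem abs_deltaOp_Ls_le_arsinh (hs : 0 ≤ s) (hα : 0 < α) (hαy : α ≤ y) :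
    |deltaOp α (Ls s) (Ls s) y| ≤ 2 * s ^ 2 * arsinh y / α := by
  have hab := abs_fint_Ls_add_sub_le_arsinh hs hα hαy
  have ha := abs_fint_Ls_le hs hα y
  have hb := abs_fint_Ls_le hs hα (y + α)
  rw [deltaOp_self_eq, abs_mul, abs_sub_comm]
  calc _ ≤ s * arsinh y / α * (s + s) := by
        gcongr
        · exact div_nonneg (mul_nonneg hs (arsinh_nonneg_iff.2 (by linarith))) hα.le
        · exact (abs_add_le _ _).trans (add_le_add ha hb)
    _ = 2 * s ^ 2 * arsinh y / α := by ring

theorem abs_deltaOp_Ls_le_of_le (hs : 0 ≤ s) (hs1 : s ≤ 1) (hα : 0 < α) (hαy : α ≤ y) :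
    |deltaOp α (Ls s) (Ls s) y| ≤ 16 * s ^ 2 * (α * log (exp 1 + α) * min y (y ^ 2)⁻¹) := by
  have hlog := one_le_log_exp_one_add hα.le
  have hy : 0 < y := by linarith
  rcases le_total y 1 with hy1 | hy1
  · have hmin : min y (y ^ 2)⁻¹ = y := min_eq_left (by
      rw [le_inv_comm₀ hy (by positivity), ← one_div, le_div_iff₀ hy]; nlinarith)
    rw [hmin]
    calc _ ≤ 3 * s ^ 2 * α * y := abs_deltaOp_Ls_le_mul hs hs1 hα hαy
      _ ≤ 16 * s ^ 2 * (α * log (exp 1 + α) * y) := by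
        have := mul_nonneg (mul_nonneg (sq_nonneg s) hα.le) hy.le
        nlinarith
  have hmin : min y (y ^ 2)⁻¹ = (y ^ 2)⁻¹ := min_eq_right (by
    rw [inv_le_comm₀ (by positivity) hy, ← one_div, div_le_iff₀ hy]; nlinarith)
  rw [hmin]
  rcases le_total (2 * α) y with h2α | h2α
  · calc _ ≤ 8 * s ^ 2 * α / (1 + y ^ 2) := abs_deltaOp_Ls_le_of_two_mul_le hs hs1 hα h2α
      _ ≤ 8 * s ^ 2 * α * (y ^ 2)⁻¹ := by
        rw [div_eq_mul_inv]; gcongr; linarith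
      _ ≤ 16 * s ^ 2 * (α * log (exp 1 + α) * (y ^ 2)⁻¹) := by
        have := mul_nonneg (mul_nonneg (sq_nonneg s) hα.le) (inv_nonneg.2 (sq_nonneg y))
        nlinarith
  · have hα' : α⁻¹ ≤ 4 * α * (y ^ 2)⁻¹ := by
      rw [inv_le_iff_one_le_mul₀ hα, ← div_eq_mul_inv, div_mul_eq_mul_div,
        le_div_iff₀ (by positivity)]
      nlinarith
    calc _ ≤ 2 * s ^ 2 * arsinh y / α := abs_deltaOp_Ls_le_arsinh hs hα hαy
      _ ≤ 2 * s ^ 2 * (2 * log (exp 1 + α)) * α⁻¹ := by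
        rw [div_eq_mul_inv]; gcongr; exact arsinh_le_two_mul_log hy.le h2α
      _ ≤ 2 * s ^ 2 * (2 * log (exp 1 + α)) * (4 * α * (y ^ 2)⁻¹) := by gcongr
      _ = 16 * s ^ 2 * (α * log (exp 1 + α) * (y ^ 2)⁻¹) := by ring

theorem abs_deriv_deltaOp_Ls_le_of_two_mul_le (hs : 0 ≤ s) (hs1 : s ≤ 1) (hα : 0 < α)
    (h2α : 2 * α ≤ y) :
    |deriv (deltaOp α (Ls s) (Ls s)) y|
      ≤ 2 * s ^ 2 * α / (1 + (y - α) ^ 2) ^ 2 + 192 * s ^ 2 * y * α / (1 + y ^ 2) ^ 2 := by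
  have hαy : α ≤ y := by linarith
  have hab := abs_fint_Ls_add_sub_le_of_le hs hs1 hα hαy
  have ha := abs_fint_Ls_le hs hα y
  have hb := abs_fint_Ls_le hs hα (y + α)
  have hu0 := slopeOp_Ls_nonneg hs hα y
  have hv0 := slopeOp_Ls_nonneg hs hα (y + α)
  have hu := slopeOp_Ls_le_of_le hs hs1 hα hαy
  have hv : slopeOp α (Ls s) (y + α) ≤ s / (1 + (y - α) ^ 2) := by
    refine (slopeOp_Ls_le_of_le hs hs1 hα (by linarith)).trans ?_
    rw [add_sub_cancel_right]; gcongr; nlinarith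
  have huv := abs_slopeOp_Ls_add_sub_le_of_two_mul_le hs hs1 hα h2α
  rw [abs_sub_comm] at hab huv
  rw [(hasDerivAt_deltaOp_self (continuous_Ls s) α y).deriv]
  calc _ ≤ _ := abs_two_mul_mul_sub_mul_le_sum_diff _ _ _ _
    _ ≤ s * α / (1 + (y - α) ^ 2) * (2 * s / (1 + (y - α) ^ 2))
        + (s + s) * (96 * s * y / (1 + y ^ 2) ^ 2 * α) := by
      gcongr
      · rw [abs_of_nonneg (by linarith), two_mul, add_div]; exact add_le_add hu hv
      · exact (abs_add_le _ _).trans (add_le_add ha hb)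
    _ = _ := by field_simp; ring

theorem abs_deriv_deltaOp_Ls_le_tail (hs : 0 ≤ s) (hα : 0 < α) (hαy : α ≤ y) :
    |deriv (deltaOp α (Ls s) (Ls s)) y| ≤ 4 * s ^ 2 / (α * √(1 + (y - α) ^ 2)) := by
  have ha := abs_fint_Ls_le hs hα y
  have hb := abs_fint_Ls_le hs hα (y + α)
  have hu0 := slopeOp_Ls_nonneg hs hα y
  have hv0 := slopeOp_Ls_nonneg hs hα (y + α)
  have hu := slopeOp_Ls_le_tail hs hα hαy
  have hv : slopeOp α (Ls s) (y + α) ≤ s / (α * √(1 + (y - α) ^ 2)) := by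
    refine (slopeOp_Ls_le_tail hs hα (by linarith)).trans ?_
    rw [add_sub_cancel_right]; gcongr; nlinarith
  rw [(hasDerivAt_deltaOp_self (continuous_Ls s) α y).deriv]
  calc _ ≤ _ := abs_two_mul_mul_sub_mul_le _ _ _ _
    _ ≤ 2 * (s * (s / (α * √(1 + (y - α) ^ 2))) + s * (s / (α * √(1 + (y - α) ^ 2)))) := by
      rw [abs_of_nonneg hu0, abs_of_nonneg hv0]
      gcongr
    _ = _ := by ring

theorem abs_deriv_deltaOp_Ls_le_of_le_one (hs : 0 ≤ s) (hs1 : s ≤ 1) (hα : 0 < α) (hαy : α ≤ y)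
    (hy1 : y ≤ 1) :
    |deriv (deltaOp α (Ls s) (Ls s)) y| ≤ 24 * s ^ 2 * α / (√(1 + (y - α) ^ 2) * (1 + y ^ 2)) := by
  have hbound := (abs_deriv_deltaOp_Ls_le hs hs1 hα y).trans
    (mul_le_mul_of_nonneg_left (min_le_left α α⁻¹) (by positivity))
  have hw : √(1 + (y - α) ^ 2) ≤ 3 / 2 := by
    rw [sqrt_le_left (by norm_num)]; nlinarith
  have : √(1 + (y - α) ^ 2) * (1 + y ^ 2) ≤ 3 := by nlinarith [sqrt_nonneg (1 + (y - α) ^ 2)]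
  rw [le_div_iff₀ (by positivity)]
  calc _ ≤ 8 * s ^ 2 * α * 3 := by gcongr
    _ = 24 * s ^ 2 * α := by ring

theorem abs_deriv_deltaOp_Ls_le_of_two_mul_le_of_one_le (hs : 0 ≤ s) (hs1 : s ≤ 1) (hα : 0 < α)
    (h2α : 2 * α ≤ y) (hy1 : 1 ≤ y) :
    |deriv (deltaOp α (Ls s) (Ls s)) y| ≤ 392 * s ^ 2 * α / (√(1 + (y - α) ^ 2) * (1 + y ^ 2)) := by
  set w := √(1 + (y - α) ^ 2)
  have hw1 : 1 ≤ w := one_le_sqrt.2 (by nlinarith)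
  have hw2 : w ^ 2 = 1 + (y - α) ^ 2 := sq_sqrt (by positivity)
  have hbound := abs_deriv_deltaOp_Ls_le_of_two_mul_le hs hs1 hα h2α
  rw [← hw2] at hbound
  have hy2 : 1 + y ^ 2 ≤ 4 * w ^ 2 := by nlinarith
  have hyw : y * w ≤ 2 * (1 + y ^ 2) := by nlinarith [sq_nonneg (y - w)]
  have hw3 : w ^ 2 ≤ w ^ 3 := pow_le_pow_right₀ hw1 (by norm_num)
  rw [le_div_iff₀ (by positivity)]
  calc _ ≤ (2 * s ^ 2 * α / (w ^ 2) ^ 2 + 192 * s ^ 2 * y * α / (1 + y ^ 2) ^ 2)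
        * (w * (1 + y ^ 2)) := by gcongr
    _ = 2 * s ^ 2 * α * ((1 + y ^ 2) / w ^ 3) + 192 * s ^ 2 * α * (y * w / (1 + y ^ 2)) := by
        field_simp
    _ ≤ 2 * s ^ 2 * α * (4 * w ^ 2 / w ^ 2)
        + 192 * s ^ 2 * α * (2 * (1 + y ^ 2) / (1 + y ^ 2)) := by
        gcongr
    _ = 392 * s ^ 2 * α := by field_simp; ring

theorem abs_deriv_deltaOp_Ls_le_of_le_two_mul (hs : 0 ≤ s) (hα : 0 < α) (hαy : α ≤ y)
    (h2α : y ≤ 2 * α) (hy1 : 1 ≤ y) :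
    |deriv (deltaOp α (Ls s) (Ls s)) y| ≤ 32 * s ^ 2 * α / (√(1 + (y - α) ^ 2) * (1 + y ^ 2)) := by
  have hy2 : 1 + y ^ 2 ≤ 8 * α ^ 2 := by nlinarith
  rw [le_div_iff₀ (by positivity)]
  calc _ ≤ 4 * s ^ 2 / (α * √(1 + (y - α) ^ 2)) * (√(1 + (y - α) ^ 2) * (1 + y ^ 2)) := by
        gcongr; exact abs_deriv_deltaOp_Ls_le_tail hs hα hαy
    _ = 4 * s ^ 2 * (1 + y ^ 2) / α := by field_simp
    _ ≤ 32 * s ^ 2 * α := by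
        rw [div_le_iff₀ hα]; nlinarith [mul_le_mul_of_nonneg_left hy2 (sq_nonneg s)]

theorem abs_deriv_deltaOp_Ls_le_of_le (hs : 0 ≤ s) (hs1 : s ≤ 1) (hα : 0 < α) (hαy : α ≤ y) :
    |deriv (deltaOp α (Ls s) (Ls s)) y|
      ≤ 392 * s ^ 2 * (α * log (exp 1 + α) * (√(1 + (y - α) ^ 2))⁻¹ * (1 + y ^ 2)⁻¹) := by
  have hlog := one_le_log_exp_one_add hα.le
  suffices h : |deriv (deltaOp α (Ls s) (Ls s)) y|
      ≤ 392 * s ^ 2 * α / (√(1 + (y - α) ^ 2) * (1 + y ^ 2)) by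
    calc _ ≤ _ := h
      _ = 392 * s ^ 2 * (α * 1 * (√(1 + (y - α) ^ 2))⁻¹ * (1 + y ^ 2)⁻¹) := by
        rw [div_eq_mul_inv, mul_inv]; ring
      _ ≤ _ := by gcongr
  rcases le_total y 1 with hy1 | hy1
  · exact (abs_deriv_deltaOp_Ls_le_of_le_one hs hs1 hα hαy hy1).trans (by gcongr; norm_num)
  rcases le_total (2 * α) y with h2α | h2α
  · exact abs_deriv_deltaOp_Ls_le_of_two_mul_le_of_one_le hs hs1 hα h2α hy1
  · exact (abs_deriv_deltaOp_Ls_le_of_le_two_mul hs hα hαy h2α hy1).trans (by gcongr; norm_num)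

end DeltaBounds

/-- Pointwise bounds on the elementary brick `δ_α[L_s]` and its `y`-derivative. -/
theorem deltaOp_Ls_bounds :
    ∃ C : ℝ, 0 < C ∧ ∀ s : ℝ, 0 < s → s ≤ 1 → ∀ y : ℝ, 0 ≤ y → ∀ α : ℝ, 0 < α →
      (|deltaOp α (Ls s) (Ls s) y| ≤ C * s ^ 2 *
          ((if α ≤ y then α * Real.log (Real.exp 1 + α) * min y (y ^ 2)⁻¹ else 0)
            + (if y ≤ α then y * min α α⁻¹ else 0))) ∧
      (|deriv (fun z => deltaOp α (Ls s) (Ls s) z) y| ≤ C * s ^ 2 *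
          ((if α ≤ y then α * Real.log (Real.exp 1 + α)
              * (Real.sqrt (1 + (y - α) ^ 2))⁻¹ * (1 + y ^ 2)⁻¹ else 0)
            + (if y ≤ α then min α α⁻¹ else 0))) := by
  refine ⟨400, by norm_num, fun s hs hs1 y hy α hα => ?_⟩
  have hlog : 0 ≤ log (exp 1 + α) := zero_le_one.trans (one_le_log_exp_one_add hα.le)
  have hmin : 0 ≤ min α α⁻¹ := le_min hα.le (by positivity)
  constructor
  · refine le_mul_ite_add_ite (by positivity) (le_total α y)
      (fun hαy => ⟨mul_nonneg (by positivity) (le_min hy (by positivity)), ?_⟩)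
      (fun _ => ⟨by positivity, ?_⟩)
    · exact (abs_deltaOp_Ls_le_of_le hs.le hs1 hα hαy).trans (by gcongr; norm_num)
    · calc _ ≤ 8 * s ^ 2 * min α α⁻¹ * y := abs_deltaOp_Ls_le hs.le hs1 hα hy
        _ ≤ 400 * s ^ 2 * (y * min α α⁻¹) := by
          rw [mul_comm y, ← mul_assoc]; gcongr; norm_num
  · refine le_mul_ite_add_ite (by positivity) (le_total α y) (fun hαy => ⟨by positivity, ?_⟩)
      (fun _ => ⟨hmin, ?_⟩)
    · exact (abs_deriv_deltaOp_Ls_le_of_le hs.le hs1 hα hαy).trans (by gcongr; norm_num)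
    · exact (abs_deriv_deltaOp_Ls_le hs.le hs1 hα y).trans (by gcongr; norm_num)
end

section
/- There is an absolute constant C such that for every odd differentiable g : ℝ → ℝ with g and g' square-integrable, every y ≥ 0 and every α > 0: (i) |(1/α)∫_{−α}^{α} g(y+t) dt| ≤ C·min{ (y+α)^{1/2}, ⟨α⟩^{−1/2} }·‖g‖_{H¹}; (ii) |(1/α)∫_0^{α} ( g(y+t) − g(y−t) ) dt| ≤ ∫_{|t| ≤ α} |g'(y+t)| dt; (iii) |(1/α)∫_0^{α} ( g(y+t) − g(y−t) ) dt| ≤ C·min{ α^{1/2}, α^{−1/2} }·‖g‖_{H¹}. -/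
open MeasureTheory Real Set Filter

/-!
The estimates come from the fundamental theorem of calculus and Cauchy–Schwarz on intervals,
`|g b - g a| ≤ |b - a|^{1/2} ‖g'‖₂` and `|∫_a^b g| ≤ |b - a|^{1/2} ‖g‖₂`, together with the
Sobolev bound `g(z)² = ∫_0^z 2 g g' ≤ ‖g‖²_{H¹}` when `g 0 = 0`.

For (i), the first estimate gives `|g(y + t)| ≤ (y + α)^{1/2} ‖g'‖₂` on the window, the sup bound
handles `α ≤ 1`, and the `L²` bound on `[y - α, y + α]` gives the decay `α^{-1/2}` for `α ≥ 1`.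
Parts (ii) and (iii) are invariant under translation of `g`, so it suffices to take `y = 0`. Then
`g t - g (-t)` is the integral of `g'` over `[-t, t]`, which gives (ii); combined with
Cauchy–Schwarz it gives the `α^{1/2}` bound of (iii), and the `L²` bound on `[0, α]` and `[-α, 0]`
gives the `α^{-1/2}` bound.
-/

open scoped Interval

theorem setIntegral_abs_le_sqrt_measureReal_mul_sqrt {X : Type*} [MeasurableSpace X]
    {μ : Measure X} {f : X → ℝ} (hf : MemLp f 2 μ) {s : Set X} (hs : μ s ≠ ⊤) :
    ∫ x in s, |f x| ∂μ ≤ √(μ.real s) * √(∫ x, f x ^ 2 ∂μ) := by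
  have : Fact (μ s < ⊤) := ⟨hs.lt_top⟩
  have holder := integral_mul_le_Lp_mul_Lq_of_nonneg (μ := μ.restrict s)
    Real.HolderConjugate.two_two (f := fun _ ↦ (1 : ℝ)) (g := fun x ↦ |f x|)
    (ae_of_all _ fun _ ↦ zero_le_one) (ae_of_all _ fun _ ↦ abs_nonneg _)
    (by simpa using memLp_const (μ := μ.restrict s) (1 : ℝ))
    (by rw [ENNReal.ofReal_ofNat]; exact (hf.restrict s).abs)
  simp only [one_mul, one_pow, integral_const, smul_eq_mul, mul_one, rpow_two, sq_abs,
    ← sqrt_eq_rpow, measureReal_restrict_apply_univ] at holder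
  refine holder.trans (mul_le_mul_of_nonneg_left (sqrt_le_sqrt ?_) (sqrt_nonneg _))
  exact setIntegral_le_integral hf.integrable_sq (ae_of_all _ fun _ ↦ sq_nonneg _)

theorem abs_intervalIntegral_le_integral_uIoc_abs (f : ℝ → ℝ) (a b : ℝ) :
    |∫ x in a..b, f x| ≤ ∫ x in Ι a b, |f x| := by
  simpa only [norm_eq_abs] using
    intervalIntegral.norm_integral_le_integral_norm_uIoc (f := f) (μ := volume)

theorem abs_intervalIntegral_le_sqrt_mul_sqrt {f : ℝ → ℝ} (hf : MemLp f 2) (a b : ℝ) :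
    |∫ x in a..b, f x| ≤ √|b - a| * √(∫ x, f x ^ 2) := by
  have hvol : volume.real (Ι a b) = |b - a| := by
    rw [measureReal_def, volume_uIoc, ENNReal.toReal_ofReal (abs_nonneg _)]
  calc |∫ x in a..b, f x| ≤ ∫ x in Ι a b, |f x| := abs_intervalIntegral_le_integral_uIoc_abs f a b
    _ ≤ √|b - a| * √(∫ x, f x ^ 2) :=
        hvol ▸ setIntegral_abs_le_sqrt_measureReal_mul_sqrt hf (by simp)

theorem MeasureTheory.MemLp.intervalIntegrable {E : Type*} [NormedAddCommGroup E] {f : ℝ → E}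
    {p : ENNReal} (hf : MemLp f p) (hp : 1 ≤ p) (a b : ℝ) : IntervalIntegrable f volume a b :=
  ((hf.locallyIntegrable hp).integrableOn_isCompact isCompact_uIcc).intervalIntegrable

theorem abs_one_div_mul_le {α X K : ℝ} (hα : 0 < α) (h : |X| ≤ K * α) : |1 / α * X| ≤ K := by
  rwa [abs_mul, abs_of_pos (one_div_pos.2 hα), one_div_mul_eq_div, div_le_iff₀ hα]

theorem le_mul_min_mul {x c a b H : ℝ} (hc : 0 ≤ c) (hH : 0 ≤ H) (ha : x ≤ c * a * H)
    (hb : x ≤ c * b * H) : x ≤ c * min a b * H := by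
  rw [mul_min_of_nonneg _ _ hc, min_mul_of_nonneg _ _ hH]
  exact le_min ha hb

theorem min_one_inv_sqrt_le_two_mul_rpow {α : ℝ} (hα : 0 < α) :
    min 1 (√α)⁻¹ ≤ 2 * (1 + α ^ 2) ^ (-(1 : ℝ) / 4) := by
  rw [neg_div, rpow_neg (by positivity)]
  set q := (1 + α ^ 2) ^ ((1 : ℝ) / 4)
  have hq : 0 < q := by positivity
  have hq4 : q ^ 4 = 1 + α ^ 2 := by
    rw [← rpow_natCast, ← rpow_mul (by positivity)]
    norm_num
  rcases le_total α 1 with h | h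
  · have : q ≤ 2 := (pow_le_pow_iff_left₀ hq.le zero_le_two four_ne_zero).1 (by nlinarith)
    calc min 1 (√α)⁻¹ ≤ 1 := min_le_left _ _
      _ ≤ 2 * q⁻¹ := by rw [← div_eq_mul_inv, le_div_iff₀ hq]; linarith
  · have hs : 0 < √α := sqrt_pos.2 hα
    have : q ≤ 2 * √α := by
      refine (pow_le_pow_iff_left₀ hq.le (by positivity) four_ne_zero).1 ?_
      rw [mul_pow, show √α ^ 4 = α ^ 2 by rw [show 4 = 2 * 2 from rfl, pow_mul, sq_sqrt hα.le],
        hq4]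
      nlinarith
    calc min 1 (√α)⁻¹ ≤ (√α)⁻¹ := min_le_right _ _
      _ ≤ 2 * q⁻¹ := by
        rw [← div_eq_mul_inv, le_div_iff₀ hq, inv_mul_le_iff₀ hs, mul_comm]
        exact this

section H1

variable {g : ℝ → ℝ}

theorem sqrt_integral_sq_le_H1norm (g : ℝ → ℝ) : √(∫ x, g x ^ 2) ≤ H1norm g :=
  sqrt_le_sqrt (le_add_of_nonneg_right (integral_nonneg fun _ ↦ sq_nonneg _))

theorem sqrt_integral_deriv_sq_le_H1norm (g : ℝ → ℝ) : √(∫ x, deriv g x ^ 2) ≤ H1norm g :=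
  sqrt_le_sqrt (le_add_of_nonneg_left (integral_nonneg fun _ ↦ sq_nonneg _))

theorem H1norm_nonneg (g : ℝ → ℝ) : 0 ≤ H1norm g := sqrt_nonneg _

theorem H1norm_comp_const_add (g : ℝ → ℝ) (y : ℝ) : H1norm (fun t ↦ g (y + t)) = H1norm g := by
  simp only [H1norm, deriv_comp_const_add]
  rw [integral_add_left_eq_self (fun x ↦ g x ^ 2) y,
    integral_add_left_eq_self (fun x ↦ deriv g x ^ 2) y]

theorem abs_sub_le_sqrt_mul_sqrt_integral_deriv_sq (hg : Differentiable ℝ g)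
    (hg' : MemLp (deriv g) 2) (a b : ℝ) :
    |g b - g a| ≤ √|b - a| * √(∫ x, deriv g x ^ 2) := by
  rw [← intervalIntegral.integral_deriv_eq_sub (fun x _ ↦ hg x)
    (hg'.intervalIntegrable one_le_two a b)]
  exact abs_intervalIntegral_le_sqrt_mul_sqrt hg' a b

theorem sq_le_integral_sq_add_integral_deriv_sq (hg : Differentiable ℝ g) (hg0 : g 0 = 0)
    (hg2 : MemLp g 2) (hg'2 : MemLp (deriv g) 2) (z : ℝ) :
    g z ^ 2 ≤ (∫ x, g x ^ 2) + ∫ x, deriv g x ^ 2 := by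
  have hderiv : ∀ x, HasDerivAt (fun u ↦ g u ^ 2) (2 * g x * deriv g x) x := fun x ↦ by
    simpa using (hg x).hasDerivAt.fun_pow 2
  have hsum := hg2.integrable_sq.add hg'2.integrable_sq
  have hprod_le : ∀ x, |2 * g x * deriv g x| ≤ g x ^ 2 + deriv g x ^ 2 := fun x ↦
    abs_le.2 ⟨by nlinarith [sq_nonneg (g x + deriv g x)], two_mul_le_add_sq _ _⟩
  have hprod : Integrable (fun x ↦ 2 * g x * deriv g x) :=
    hsum.mono' ((hg.continuous.aestronglyMeasurable.const_mul 2).mul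
      (measurable_deriv g).aestronglyMeasurable) (ae_of_all _ hprod_le)
  calc g z ^ 2 = ∫ x in 0..z, 2 * g x * deriv g x := by
        rw [intervalIntegral.integral_eq_sub_of_hasDerivAt (fun x _ ↦ hderiv x)
          hprod.intervalIntegrable, hg0]
        ring
    _ ≤ ∫ x in Ι 0 z, |2 * g x * deriv g x| :=
        (le_abs_self _).trans (abs_intervalIntegral_le_integral_uIoc_abs _ 0 z)
    _ ≤ ∫ x, |2 * g x * deriv g x| :=
        setIntegral_le_integral hprod.abs (ae_of_all _ fun _ ↦ abs_nonneg _)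
    _ ≤ ∫ x, (g x ^ 2 + deriv g x ^ 2) := integral_mono hprod.abs hsum hprod_le
    _ = (∫ x, g x ^ 2) + ∫ x, deriv g x ^ 2 := integral_add hg2.integrable_sq hg'2.integrable_sq

theorem abs_le_H1norm (hg : Differentiable ℝ g) (hg0 : g 0 = 0) (hg2 : MemLp g 2)
    (hg'2 : MemLp (deriv g) 2) (z : ℝ) : |g z| ≤ H1norm g := by
  rw [← sqrt_sq_eq_abs]
  exact sqrt_le_sqrt (sq_le_integral_sq_add_integral_deriv_sq hg hg0 hg2 hg'2 z)

theorem abs_sub_neg_le_setIntegral_abs_deriv (hg : Differentiable ℝ g)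
    (hg' : LocallyIntegrable (deriv g)) {α t : ℝ} (ht : t ∈ Icc 0 α) :
    |g t - g (-t)| ≤ ∫ u in Icc (-α) α, |deriv g u| := by
  rw [← intervalIntegral.integral_deriv_eq_sub (fun x _ ↦ hg x)
    (hg'.integrableOn_isCompact isCompact_uIcc).intervalIntegrable]
  refine (abs_intervalIntegral_le_integral_uIoc_abs _ _ _).trans
    (setIntegral_mono_set (hg'.integrableOn_isCompact isCompact_Icc).abs
      (ae_of_all _ fun _ ↦ abs_nonneg _) ?_)
  refine (uIoc_subset_uIcc.trans (uIcc_subset_Icc ?_ ?_)).eventuallyLE <;>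
    constructor <;> linarith [ht.1, ht.2]

theorem abs_average_sub_neg_le_setIntegral_abs_deriv (hg : Differentiable ℝ g)
    (hg' : LocallyIntegrable (deriv g)) {α : ℝ} (hα : 0 < α) :
    |1 / α * ∫ t in (0 : ℝ)..α, (g t - g (-t))| ≤ ∫ t in Icc (-α) α, |deriv g t| := by
  refine abs_one_div_mul_le hα ?_
  have hpointwise : ∀ t ∈ Ι 0 α, ‖g t - g (-t)‖ ≤ ∫ t in Icc (-α) α, |deriv g t| :=
    fun t ht ↦ abs_sub_neg_le_setIntegral_abs_deriv hg hg'
      (Ioc_subset_Icc_self ((uIoc_of_le hα.le) ▸ ht))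
  simpa [abs_of_pos hα] using intervalIntegral.norm_integral_le_of_norm_le_const hpointwise

theorem abs_average_sub_neg_le_sqrt_mul_H1norm (hg : Differentiable ℝ g)
    (hg' : MemLp (deriv g) 2) {α : ℝ} (hα : 0 < α) :
    |1 / α * ∫ t in (0 : ℝ)..α, (g t - g (-t))| ≤ 2 * √α * H1norm g :=
  calc |1 / α * ∫ t in (0 : ℝ)..α, (g t - g (-t))|
      ≤ ∫ t in Icc (-α) α, |deriv g t| :=
        abs_average_sub_neg_le_setIntegral_abs_deriv hg (hg'.locallyIntegrable one_le_two) hα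
    _ ≤ √(volume.real (Icc (-α) α)) * √(∫ x, deriv g x ^ 2) :=
        setIntegral_abs_le_sqrt_measureReal_mul_sqrt hg' measure_Icc_lt_top.ne
    _ = √2 * √α * √(∫ x, deriv g x ^ 2) := by
        rw [volume_real_Icc_of_le (by linarith), show α - -α = 2 * α by ring,
          sqrt_mul zero_le_two]
    _ ≤ 2 * √α * H1norm g := by
        gcongr
        · exact sqrt_le_self_iff.2 (Or.inr one_le_two)
        · exact sqrt_integral_deriv_sq_le_H1norm g

theorem abs_average_sub_neg_le_inv_sqrt_mul_H1norm (hg : MemLp g 2) {α : ℝ} (hα : 0 < α) :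
    |1 / α * ∫ t in (0 : ℝ)..α, (g t - g (-t))| ≤ 2 * (√α)⁻¹ * H1norm g := by
  refine abs_one_div_mul_le hα ?_
  have hneg : MemLp (fun t ↦ g (-t)) 2 :=
    hg.comp_measurePreserving (Measure.measurePreserving_neg _)
  rw [intervalIntegral.integral_sub (hg.intervalIntegrable one_le_two _ _)
    (hneg.intervalIntegrable one_le_two _ _), intervalIntegral.integral_comp_neg, neg_zero]
  have hsq : (√α)⁻¹ * α = √α := by rw [inv_mul_eq_div, div_sqrt]
  calc |(∫ t in (0 : ℝ)..α, g t) - ∫ t in -α..0, g t|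
      ≤ |∫ t in (0 : ℝ)..α, g t| + |∫ t in -α..0, g t| := abs_sub _ _
    _ ≤ √|α - 0| * √(∫ x, g x ^ 2) + √|0 - -α| * √(∫ x, g x ^ 2) :=
        add_le_add (abs_intervalIntegral_le_sqrt_mul_sqrt hg _ _)
          (abs_intervalIntegral_le_sqrt_mul_sqrt hg _ _)
    _ = 2 * √α * √(∫ x, g x ^ 2) := by
        rw [sub_zero, zero_sub, neg_neg, abs_of_pos hα]
        ring
    _ ≤ 2 * (√α)⁻¹ * H1norm g * α := by
        rw [mul_right_comm _ (H1norm g), mul_assoc 2 _ α, hsq]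
        gcongr
        exact sqrt_integral_sq_le_H1norm g

theorem abs_average_sub_neg_le_min_rpow_mul_H1norm (hg : Differentiable ℝ g) (hg2 : MemLp g 2)
    (hg'2 : MemLp (deriv g) 2) {α : ℝ} (hα : 0 < α) :
    |1 / α * ∫ t in (0 : ℝ)..α, (g t - g (-t))|
      ≤ 2 * min (α ^ ((1 : ℝ) / 2)) (α ^ (-(1 : ℝ) / 2)) * H1norm g := by
  rw [← sqrt_eq_rpow, neg_div, rpow_neg hα.le, ← sqrt_eq_rpow]
  exact le_mul_min_mul zero_le_two (H1norm_nonneg g)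
    (abs_average_sub_neg_le_sqrt_mul_H1norm hg hg'2 hα)
    (abs_average_sub_neg_le_inv_sqrt_mul_H1norm hg2 hα)

theorem abs_average_le_two_mul_of_abs_le {f : ℝ → ℝ} {α K : ℝ} (hα : 0 < α)
    (hf : ∀ t ∈ Ι (-α) α, |f t| ≤ K) : |1 / α * ∫ t in (-α)..α, f t| ≤ 2 * K := by
  refine abs_one_div_mul_le hα ?_
  have := intervalIntegral.norm_integral_le_of_norm_le_const (f := f) hf
  rwa [show α - -α = 2 * α by ring, abs_of_pos (by linarith), ← mul_assoc, mul_comm K] at this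

theorem abs_average_le_sqrt_mul_H1norm (hg : Differentiable ℝ g) (hg0 : g 0 = 0)
    (hg' : MemLp (deriv g) 2) {y α : ℝ} (hy : 0 ≤ y) (hα : 0 < α) :
    |1 / α * ∫ t in (-α)..α, g (y + t)| ≤ 2 * √(y + α) * H1norm g := by
  rw [mul_assoc]
  refine abs_average_le_two_mul_of_abs_le hα fun t ht ↦ ?_
  rw [uIoc_of_le (by linarith)] at ht
  have := abs_sub_le_sqrt_mul_sqrt_integral_deriv_sq hg hg' 0 (y + t)
  rw [hg0, sub_zero, sub_zero] at this
  refine this.trans (mul_le_mul (sqrt_le_sqrt (abs_le.2 ⟨?_, ?_⟩))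
    (sqrt_integral_deriv_sq_le_H1norm g) (sqrt_nonneg _) (sqrt_nonneg _)) <;>
    linarith [ht.1, ht.2]

theorem abs_average_le_inv_sqrt_mul_H1norm (hg : MemLp g 2) {α : ℝ} (hα : 0 < α) (y : ℝ) :
    |1 / α * ∫ t in (-α)..α, g (y + t)| ≤ 2 * (√α)⁻¹ * H1norm g := by
  refine abs_one_div_mul_le hα ?_
  rw [intervalIntegral.integral_comp_add_left g y]
  have hsq : √2 * (√α)⁻¹ * α = √2 * √α := by rw [mul_assoc, inv_mul_eq_div, div_sqrt]
  calc |∫ x in y + -α..y + α, g x| ≤ √|y + α - (y + -α)| * √(∫ x, g x ^ 2) :=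
        abs_intervalIntegral_le_sqrt_mul_sqrt hg _ _
    _ = √2 * (√α)⁻¹ * √(∫ x, g x ^ 2) * α := by
        rw [show y + α - (y + -α) = 2 * α by ring, abs_of_pos (by linarith), sqrt_mul zero_le_two,
          mul_right_comm _ _ α, hsq]
    _ ≤ 2 * (√α)⁻¹ * H1norm g * α := by
        gcongr
        · exact sqrt_le_self_iff.2 (Or.inr one_le_two)
        · exact sqrt_integral_sq_le_H1norm g

theorem abs_average_le_rpow_mul_H1norm (hg : Differentiable ℝ g) (hg0 : g 0 = 0)
    (hg2 : MemLp g 2) (hg'2 : MemLp (deriv g) 2) {α : ℝ} (hα : 0 < α) (y : ℝ) :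
    |1 / α * ∫ t in (-α)..α, g (y + t)| ≤ 4 * (1 + α ^ 2) ^ (-(1 : ℝ) / 4) * H1norm g := by
  have hbounded : |1 / α * ∫ t in (-α)..α, g (y + t)| ≤ 2 * 1 * H1norm g :=
    (abs_average_le_two_mul_of_abs_le hα fun t _ ↦ abs_le_H1norm hg hg0 hg2 hg'2 _).trans_eq
      (by ring)
  calc |1 / α * ∫ t in (-α)..α, g (y + t)| ≤ 2 * min 1 (√α)⁻¹ * H1norm g :=
        le_mul_min_mul zero_le_two (H1norm_nonneg g) hbounded
          (abs_average_le_inv_sqrt_mul_H1norm hg2 hα y)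
    _ ≤ 2 * (2 * (1 + α ^ 2) ^ (-(1 : ℝ) / 4)) * H1norm g := by
        gcongr
        · exact H1norm_nonneg g
        · exact min_one_inv_sqrt_le_two_mul_rpow hα
    _ = 4 * (1 + α ^ 2) ^ (-(1 : ℝ) / 4) * H1norm g := by ring

end H1

/-- Bounds on symmetric averages of a general odd `H¹` function. -/
theorem odd_average_bounds :
    ∃ C : ℝ, 0 < C ∧ ∀ g : ℝ → ℝ, (∀ x : ℝ, g (-x) = - g x) → Differentiable ℝ g →
      MemLp g 2 volume → MemLp (deriv g) 2 volume →
      ∀ y : ℝ, 0 ≤ y → ∀ α : ℝ, 0 < α →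
      (|(1 / α) * ∫ t in (-α)..α, g (y + t)|
          ≤ C * min (Real.sqrt (y + α)) ((1 + α ^ 2) ^ (-(1:ℝ)/4)) * H1norm g) ∧
      (|(1 / α) * ∫ t in (0:ℝ)..α, (g (y + t) - g (y - t))|
          ≤ ∫ t in Set.Icc (-α) α, |deriv g (y + t)|) ∧
      (|(1 / α) * ∫ t in (0:ℝ)..α, (g (y + t) - g (y - t))|
          ≤ C * min (α ^ ((1:ℝ)/2)) (α ^ (-(1:ℝ)/2)) * H1norm g) := by
  refine ⟨4, four_pos, fun g hodd hg hg2 hg'2 y hy α hα ↦ ?_⟩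
  have hg0 : g 0 = 0 := self_eq_neg.1 (by simpa using hodd 0)
  have hH : 0 ≤ H1norm g := H1norm_nonneg g
  set gy : ℝ → ℝ := fun t ↦ g (y + t)
  have hreflect : ∀ t, g (y - t) = gy (-t) := fun t ↦ congrArg g (sub_eq_add_neg y t)
  have hderiv : deriv gy = fun t ↦ deriv g (y + t) := funext fun t ↦ deriv_comp_const_add ..
  have hgy : Differentiable ℝ gy := hg.comp (differentiable_id.const_add y)
  have hgy2 : MemLp gy 2 := hg2.comp_measurePreserving (measurePreserving_add_left volume y)
  have hgy'2 : MemLp (deriv gy) 2 :=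
    hderiv ▸ hg'2.comp_measurePreserving (measurePreserving_add_left volume y)
  simp only [hreflect]
  refine ⟨le_mul_min_mul four_pos.le hH ?_ ?_, ?_, ?_⟩
  · exact (abs_average_le_sqrt_mul_H1norm hg hg0 hg'2 hy hα).trans (by gcongr; norm_num)
  · exact abs_average_le_rpow_mul_H1norm hg hg0 hg2 hg'2 hα y
  · simpa only [hderiv] using
      abs_average_sub_neg_le_setIntegral_abs_deriv hgy (hgy'2.locallyIntegrable one_le_two) hα
  · refine (abs_average_sub_neg_le_min_rpow_mul_H1norm hgy hgy2 hgy'2 hα).trans ?_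
    rw [H1norm_comp_const_add g y]
    gcongr
    norm_num
end
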